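/- arXiv:1506.06994 — 6 statements merged into one kernel-verified Lean document; each statement's English description precedes it below -/
import Mathlib

section
/- Let n ≥ 1, 0 < λ ≤ Λ, 1 ≤ m < s, R > 0, δ > 0 and γ₁, γ ≥ 0. Set μ = 2/(s−1) if 1 ≤ m ≤ 2s/(s+1) and μ = m/(s−m) if 2s/(s+1) < m < s, let a = (4μδ⁻¹max{Λ(1+n+2μ),1})^{1/(s−1)}, b = (2^{m+1}μ^m δ⁻¹)^{1/(s−m)}, and C_R = max{ a(1+γ₁R)^{1/(s−1)} R^{μ−2/(s−1)}, b γ^{1/(s−m)} R^{μ−m/(s−m)} }. Define φ_R : B_R → ℝ by φ_R(x) = C_R R^μ (R² − |x|²)^{−μ} for |x| < R. Then φ_R is smooth on B_R and satisfies, in the classical sense at every point x with |x| < R, the differential inequality P⁺_{λ,Λ}(D²φ_R(x)) + γ₁|Dφ_R(x)| + γ|Dφ_R(x)|^m − δ φ_R(x)^s ≤ 0, where Dφ_R is the gradient and D²φ_R the Hessian matrix of φ_R. -/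
noncomputable section
open Real

abbrev En (n : ℕ) := EuclideanSpace ℝ (Fin n)

/-- A modulus of continuity. -/
def IsModulus (ω : ℝ → ℝ) : Prop :=
  (∀ t, 0 ≤ t → 0 ≤ ω t) ∧ MonotoneOn ω (Set.Ici 0) ∧ ω 0 = 0 ∧
    ContinuousWithinAt ω (Set.Ici 0) 0

/-- The Hessian matrix of a function. -/
def hessianMatrix {n : ℕ} (φ : En n → ℝ) (x : En n) : Matrix (Fin n) (Fin n) ℝ :=
  fun i j =>
    iteratedFDeriv ℝ 2 φ x ![EuclideanSpace.single i 1, EuclideanSpace.single j 1]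

/-- Viscosity subsolution of `F(x,D²u) + H(x,Du) - |u|^{s-1}u = f(x)` in `ℝⁿ`. -/
def ViscositySubsolution {n : ℕ} (F : En n → Matrix (Fin n) (Fin n) ℝ → ℝ)
    (H : En n → En n → ℝ) (s : ℝ) (f : En n → ℝ) (u : En n → ℝ) : Prop :=
  ∀ φ : En n → ℝ, ContDiff ℝ 2 φ → ∀ x₀ : En n, IsLocalMax (u - φ) x₀ →
    F x₀ (hessianMatrix φ x₀) + H x₀ (gradient φ x₀)
      - |u x₀| ^ (s - 1) * u x₀ ≥ f x₀

def ViscositySupersolution {n : ℕ} (F : En n → Matrix (Fin n) (Fin n) ℝ → ℝ)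
    (H : En n → En n → ℝ) (s : ℝ) (f : En n → ℝ) (u : En n → ℝ) : Prop :=
  ∀ φ : En n → ℝ, ContDiff ℝ 2 φ → ∀ x₀ : En n, IsLocalMin (u - φ) x₀ →
    F x₀ (hessianMatrix φ x₀) + H x₀ (gradient φ x₀)
      - |u x₀| ^ (s - 1) * u x₀ ≤ f x₀

/-- The Pucci maximal operator. -/
def pucci (lam Lam : ℝ) {n : ℕ} (X : Matrix (Fin n) (Fin n) ℝ) : ℝ :=
  sSup ((fun A : Matrix (Fin n) (Fin n) ℝ => (A * X).trace) ''
    {A | A.IsSymm ∧ (A - lam • (1 : Matrix (Fin n) (Fin n) ℝ)).PosSemidef ∧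
      (Lam • (1 : Matrix (Fin n) (Fin n) ℝ) - A).PosSemidef})


/-! ### Auxiliary lemmas -/

open Matrix in
private lemma psd_trace_nonneg {N : ℕ} {M : Matrix (Fin N) (Fin N) ℝ}
    (hM : M.PosSemidef) : 0 ≤ M.trace := by
  have h : ∀ i, 0 ≤ M i i := by
    intro i
    have h2 := hM.dotProduct_mulVec_nonneg (Pi.single i 1)
    simpa [dotProduct, Matrix.mulVec, Pi.single_apply, Finset.sum_ite_eq,
      Finset.sum_ite_eq'] using h2
  exact Finset.sum_nonneg fun i _ => h i

open scoped MatrixOrder in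
private lemma psd_trace_mul_nonneg {N : ℕ} {P Q : Matrix (Fin N) (Fin N) ℝ}
    (hP : P.PosSemidef) (hQ : Q.PosSemidef) : 0 ≤ (P * Q).trace := by
  obtain ⟨B, hB⟩ := CStarAlgebra.nonneg_iff_eq_star_mul_self.mp hP.nonneg
  rw [hB, Matrix.star_eq_conjTranspose, Matrix.mul_assoc, Matrix.trace_mul_comm]
  exact psd_trace_nonneg (by simpa [Matrix.mul_assoc] using hQ.mul_mul_conjTranspose_same B)

private lemma psd_smul {N : ℕ} {c : ℝ} (hc : 0 ≤ c) {M : Matrix (Fin N) (Fin N) ℝ}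
    (hM : M.PosSemidef) : (c • M).PosSemidef := by
  rw [Matrix.posSemidef_iff_dotProduct_mulVec]
  constructor
  · rw [Matrix.IsHermitian, Matrix.conjTranspose_smul, hM.1]
    simp
  · intro v
    have h := hM.dotProduct_mulVec_nonneg v
    rw [Matrix.smul_mulVec, dotProduct_smul]
    exact mul_nonneg hc h

open Matrix in
private lemma psd_vecMulVec {N : ℕ} (v : Fin N → ℝ) : (Matrix.vecMulVec v v).PosSemidef := by
  rw [Matrix.posSemidef_iff_dotProduct_mulVec]
  constructor
  · ext i j
    simp [Matrix.conjTranspose_apply, Matrix.vecMulVec_apply, mul_comm]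
  · intro w
    have h : star w ⬝ᵥ ((Matrix.vecMulVec v v) *ᵥ w) = (∑ i, v i * w i) ^ 2 := by
      simp only [dotProduct, Matrix.mulVec, Matrix.vecMulVec_apply, star_trivial,
        Finset.mul_sum]
      rw [sq, Finset.sum_mul_sum]
      apply Finset.sum_congr rfl
      intro i _
      apply Finset.sum_congr rfl
      intro j _
      ring
    rw [h]
    positivity

private lemma pucci_le {N : ℕ} {lam Lam : ℝ} (h0 : 0 < lam) (h1 : lam ≤ Lam)
    {X : Matrix (Fin N) (Fin N) ℝ} (hX : X.PosSemidef) :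
    pucci lam Lam X ≤ Lam * X.trace := by
  apply Real.sSup_le
  · rintro v ⟨A, ⟨hsym, hA1, hA2⟩, rfl⟩
    have h := psd_trace_mul_nonneg hA2 hX
    rw [Matrix.sub_mul, Matrix.trace_sub, Matrix.smul_mul, Matrix.trace_smul,
      Matrix.one_mul, smul_eq_mul] at h
    linarith
  · exact mul_nonneg (le_trans h0.le h1) (psd_trace_nonneg hX)

private lemma rpow_shift {r R2 e f g : ℝ} (hr : 0 < r) (hrR2 : r ≤ R2) (he : 0 ≤ e)
    (hef : e + f = g) : r ^ g ≤ R2 ^ e * r ^ f := by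
  have h1 : r ^ g = r ^ e * r ^ f := by rw [← Real.rpow_add hr, hef]
  rw [h1]
  exact mul_le_mul_of_nonneg_right (Real.rpow_le_rpow hr.le hrR2 he) (Real.rpow_nonneg hr.le f)

private lemma pow_collect {R : ℝ} (hR : 0 < R) (e1 e2 e3 : ℝ) (h : e1 + e2 = e3) :
    R ^ e1 * R ^ e2 = R ^ e3 := by rw [← Real.rpow_add hR, h]

set_option maxHeartbeats 1000000 in
private lemma scalar_key (nR μ s m R δ γ₁ γ Lam M CR ρ : ℝ)
    (hn : 1 ≤ nR) (hμ : 0 < μ) (hs1 : 1 < s) (hm : 1 ≤ m) (hms : m < s)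
    (hR : 0 < R) (hδ : 0 < δ) (hγ₁ : 0 ≤ γ₁) (hγ : 0 ≤ γ) (hLam : 0 < Lam)
    (hM1 : 1 ≤ M) (hMla : Lam * (1 + nR + 2 * μ) ≤ M)
    (hμ1 : 2 ≤ μ * (s - 1)) (hμ2 : m ≤ μ * (s - m))
    (hρ0 : 0 ≤ ρ) (hρR : ρ < R) (hCRpos : 0 < CR)
    (hC1 : 4 * μ * δ⁻¹ * M * (1 + γ₁ * R) * R ^ (μ * (s - 1) - 2) ≤ CR ^ (s - 1))
    (hC2 : (2:ℝ) ^ (m + 1) * μ ^ m * δ⁻¹ * γ * R ^ (μ * (s - m) - m) ≤ CR ^ (s - m))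
    {r : ℝ} (hrdef : r = R ^ 2 - ρ ^ 2) :
    Lam * (2 * (CR * R ^ μ * (μ * r ^ (-μ - 1))) * nR
        + 4 * (CR * R ^ μ * (μ * ((μ + 1) * r ^ (-μ - 2)))) * ρ ^ 2)
      + γ₁ * (2 * (CR * R ^ μ * (μ * r ^ (-μ - 1))) * ρ)
      + γ * (2 * (CR * R ^ μ * (μ * r ^ (-μ - 1))) * ρ) ^ m
      - δ * (CR * R ^ μ * r ^ (-μ)) ^ s ≤ 0 := by
  have hr : 0 < r := by nlinarith
  have hrR2 : r ≤ R ^ 2 := by nlinarith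
  have hρ2 : ρ ^ 2 = R ^ 2 - r := by rw [hrdef]; ring
  have hR2 : (R : ℝ) ^ 2 = R ^ (2 : ℝ) := by
    rw [← Real.rpow_natCast R 2]; norm_num
  have hrR2' : r ≤ R ^ (2:ℝ) := hR2 ▸ hrR2
  -- value of the RHS term
  have hVeq : (CR * R ^ μ * r ^ (-μ)) ^ s = CR ^ s * (R ^ (μ * s) * r ^ (-(μ * s))) := by
    rw [Real.mul_rpow (by positivity) (by positivity),
        Real.mul_rpow hCRpos.le (by positivity), ← Real.rpow_mul hR.le,
        ← Real.rpow_mul hr.le, mul_assoc]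
    norm_num
  have hCRs1 : CR ^ s = CR * CR ^ (s - 1) := by
    have h := Real.rpow_add hCRpos 1 (s - 1)
    rw [Real.rpow_one] at h
    rw [← h]; ring_nf
  have hCRsm : CR ^ s = CR ^ m * CR ^ (s - m) := by
    have h := Real.rpow_add hCRpos m (s - m)
    rw [← h]; ring_nf
  -- Part A
  have hA : Lam * (2 * (CR * R ^ μ * (μ * r ^ (-μ - 1))) * nR
        + 4 * (CR * R ^ μ * (μ * ((μ + 1) * r ^ (-μ - 2)))) * ρ ^ 2)
      + γ₁ * (2 * (CR * R ^ μ * (μ * r ^ (-μ - 1))) * ρ)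
      ≤ δ / 2 * (CR * R ^ μ * r ^ (-μ)) ^ s := by
    have e1 : r ^ (-μ - 1) = r ^ (-μ - 2) * r := by
      rw [show (-μ - 1 : ℝ) = (-μ - 2) + 1 by ring, Real.rpow_add hr, Real.rpow_one]
    have eA1 : Lam * (2 * (CR * R ^ μ * (μ * r ^ (-μ - 1))) * nR
          + 4 * (CR * R ^ μ * (μ * ((μ + 1) * r ^ (-μ - 2)))) * ρ ^ 2)
        + γ₁ * (2 * (CR * R ^ μ * (μ * r ^ (-μ - 1))) * ρ)
        = 2 * μ * CR * R ^ μ * r ^ (-μ - 2)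
            * (Lam * (nR * r + 2 * (μ + 1) * ρ ^ 2) + γ₁ * ρ * r) := by
      rw [e1]; ring
    have eA2 : Lam * (nR * r + 2 * (μ + 1) * ρ ^ 2) + γ₁ * ρ * r
        ≤ M * (1 + γ₁ * R) * R ^ 2 := by
      have h1 : nR * r + 2 * (μ + 1) * ρ ^ 2 ≤ (1 + nR + 2 * μ) * R ^ 2 := by
        nlinarith [mul_nonneg (sub_nonneg.2 hn) (sq_nonneg ρ)]
      have h2 : Lam * (nR * r + 2 * (μ + 1) * ρ ^ 2) ≤ M * R ^ 2 := by
        calc Lam * (nR * r + 2 * (μ + 1) * ρ ^ 2) ≤ Lam * ((1 + nR + 2 * μ) * R ^ 2) := by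
              apply mul_le_mul_of_nonneg_left h1 hLam.le
          _ = Lam * (1 + nR + 2 * μ) * R ^ 2 := by ring
          _ ≤ M * R ^ 2 := mul_le_mul_of_nonneg_right hMla (by positivity)
      have h3 : γ₁ * ρ * r ≤ γ₁ * R * (M * R ^ 2) := by
        have h4 : ρ * r ≤ R * R ^ 2 := by
          apply mul_le_mul hρR.le hrR2 hr.le hR.le
        have h5 : R * R ^ 2 ≤ R * (M * R ^ 2) := by
          nlinarith [mul_nonneg (sub_nonneg.2 hM1) (pow_pos hR 3).le]
        calc γ₁ * ρ * r = γ₁ * (ρ * r) := by ring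
          _ ≤ γ₁ * (R * R ^ 2) := mul_le_mul_of_nonneg_left h4 hγ₁
          _ ≤ γ₁ * (R * (M * R ^ 2)) := mul_le_mul_of_nonneg_left h5 hγ₁
          _ = γ₁ * R * (M * R ^ 2) := by ring
      nlinarith [h2, h3]
    rw [eA1, hVeq, hCRs1]
    have hstep1 : R ^ μ * R ^ (2:ℝ) * r ^ (-μ - 2)
        ≤ R ^ (μ * (s - 1) - 2) * (R ^ (μ * s) * r ^ (-(μ * s))) := by
      have h1 : r ^ (-μ - 2 : ℝ) ≤ (R ^ (2:ℝ)) ^ (μ * (s - 1) - 2) * r ^ (-(μ * s)) :=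
        rpow_shift hr hrR2' (by linarith) (by ring)
      have h2 : (R ^ (2:ℝ)) ^ (μ * (s - 1) - 2) = R ^ (2 * (μ * (s - 1) - 2)) := by
        rw [← Real.rpow_mul hR.le]
      calc R ^ μ * R ^ (2:ℝ) * r ^ (-μ - 2)
          ≤ R ^ μ * R ^ (2:ℝ) * ((R ^ (2:ℝ)) ^ (μ * (s - 1) - 2) * r ^ (-(μ * s))) := by
            apply mul_le_mul_of_nonneg_left h1 (by positivity)
        _ = (R ^ μ * R ^ (2:ℝ) * R ^ (2 * (μ * (s - 1) - 2))) * r ^ (-(μ * s)) := by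
            rw [h2]; ring
        _ = R ^ (μ * (s - 1) - 2) * (R ^ (μ * s) * r ^ (-(μ * s))) := by
            rw [pow_collect hR μ 2 (μ + 2) (by ring),
                pow_collect hR (μ + 2) (2 * (μ * (s - 1) - 2)) (μ * (s - 1) - 2 + μ * s) (by ring),
                ← pow_collect hR (μ * (s - 1) - 2) (μ * s) _ rfl]
            ring
    have hC1' : δ / 2 * (CR * CR ^ (s - 1)) ≥ δ / 2 * (CR * (4 * μ * δ⁻¹ * M * (1 + γ₁ * R) * R ^ (μ * (s - 1) - 2))) := by
      apply mul_le_mul_of_nonneg_left _ (by positivity)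
      exact mul_le_mul_of_nonneg_left hC1 hCRpos.le
    have hfin : 2 * μ * CR * R ^ μ * r ^ (-μ - 2) * (M * (1 + γ₁ * R) * R ^ 2)
        ≤ δ / 2 * (CR * (4 * μ * δ⁻¹ * M * (1 + γ₁ * R) * R ^ (μ * (s - 1) - 2)))
          * (R ^ (μ * s) * r ^ (-(μ * s))) := by
      have lhs_eq : 2 * μ * CR * R ^ μ * r ^ (-μ - 2) * (M * (1 + γ₁ * R) * R ^ 2)
          = (2 * μ * CR * M * (1 + γ₁ * R)) * (R ^ μ * R ^ (2:ℝ) * r ^ (-μ - 2)) := by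
        rw [hR2]; ring
      have rhs_eq : δ / 2 * (CR * (4 * μ * δ⁻¹ * M * (1 + γ₁ * R) * R ^ (μ * (s - 1) - 2)))
          * (R ^ (μ * s) * r ^ (-(μ * s)))
          = (2 * μ * CR * M * (1 + γ₁ * R))
            * (R ^ (μ * (s - 1) - 2) * (R ^ (μ * s) * r ^ (-(μ * s)))) := by
        field_simp
        ring
      rw [lhs_eq, rhs_eq]
      exact mul_le_mul_of_nonneg_left hstep1 (by positivity)
    calc 2 * μ * CR * R ^ μ * r ^ (-μ - 2)
          * (Lam * (nR * r + 2 * (μ + 1) * ρ ^ 2) + γ₁ * ρ * r)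
        ≤ 2 * μ * CR * R ^ μ * r ^ (-μ - 2) * (M * (1 + γ₁ * R) * R ^ 2) := by
          apply mul_le_mul_of_nonneg_left eA2 (by positivity)
      _ ≤ δ / 2 * (CR * (4 * μ * δ⁻¹ * M * (1 + γ₁ * R) * R ^ (μ * (s - 1) - 2)))
          * (R ^ (μ * s) * r ^ (-(μ * s))) := hfin
      _ ≤ δ / 2 * (CR * CR ^ (s - 1)) * (R ^ (μ * s) * r ^ (-(μ * s))) := by
          apply mul_le_mul_of_nonneg_right hC1' (by positivity)
      _ = δ / 2 * (CR * CR ^ (s - 1) * (R ^ (μ * s) * r ^ (-(μ * s)))) := by ring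
  -- Part B
  have hB : γ * (2 * (CR * R ^ μ * (μ * r ^ (-μ - 1))) * ρ) ^ m
      ≤ δ / 2 * (CR * R ^ μ * r ^ (-μ)) ^ s := by
    have hbase : (2 * (CR * R ^ μ * (μ * r ^ (-μ - 1))) * ρ) ^ m
        ≤ (2 * (CR * R ^ μ * (μ * r ^ (-μ - 1))) * R) ^ m := by
      apply Real.rpow_le_rpow (by positivity) _ (by linarith)
      apply mul_le_mul_of_nonneg_left hρR.le (by positivity)
    have hexp : (2 * (CR * R ^ μ * (μ * r ^ (-μ - 1))) * R) ^ m
        = (2:ℝ) ^ m * μ ^ m * CR ^ m * (R ^ (μ * m) * R ^ m * r ^ ((-μ - 1) * m)) := by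
      rw [show 2 * (CR * R ^ μ * (μ * r ^ (-μ - 1))) * R
            = 2 * μ * CR * R ^ μ * r ^ (-μ - 1) * R by ring]
      rw [Real.mul_rpow (by positivity) hR.le,
          Real.mul_rpow (by positivity) (by positivity),
          Real.mul_rpow (by positivity) (by positivity),
          Real.mul_rpow (by positivity) hCRpos.le,
          Real.mul_rpow (by norm_num) hμ.le,
          ← Real.rpow_mul hR.le, ← Real.rpow_mul hr.le]
      ring
    have hstep2 : R ^ (μ * m) * R ^ m * r ^ ((-μ - 1) * m)
        ≤ R ^ (μ * (s - m) - m) * (R ^ (μ * s) * r ^ (-(μ * s))) := by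
      have h1 : r ^ ((-μ - 1) * m : ℝ) ≤ (R ^ (2:ℝ)) ^ (μ * (s - m) - m) * r ^ (-(μ * s)) :=
        rpow_shift hr hrR2' (by linarith) (by ring)
      have h2 : (R ^ (2:ℝ)) ^ (μ * (s - m) - m) = R ^ (2 * (μ * (s - m) - m)) := by
        rw [← Real.rpow_mul hR.le]
      calc R ^ (μ * m) * R ^ m * r ^ ((-μ - 1) * m)
          ≤ R ^ (μ * m) * R ^ m * ((R ^ (2:ℝ)) ^ (μ * (s - m) - m) * r ^ (-(μ * s))) := by
            apply mul_le_mul_of_nonneg_left h1 (by positivity)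
        _ = (R ^ (μ * m) * R ^ m * R ^ (2 * (μ * (s - m) - m))) * r ^ (-(μ * s)) := by
            rw [h2]; ring
        _ = R ^ (μ * (s - m) - m) * (R ^ (μ * s) * r ^ (-(μ * s))) := by
            rw [pow_collect hR (μ * m) m (μ * m + m) (by ring),
                pow_collect hR (μ * m + m) (2 * (μ * (s - m) - m))
                  (μ * (s - m) - m + μ * s) (by ring),
                ← pow_collect hR (μ * (s - m) - m) (μ * s) _ rfl]
            ring
    have hmain : γ * ((2:ℝ) ^ m * μ ^ m * CR ^ m * (R ^ (μ * m) * R ^ m * r ^ ((-μ - 1) * m)))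
        ≤ δ / 2 * (CR ^ m * ((2:ℝ) ^ (m + 1) * μ ^ m * δ⁻¹ * γ * R ^ (μ * (s - m) - m)))
          * (R ^ (μ * s) * r ^ (-(μ * s))) := by
      have h2m : (2:ℝ) ^ (m + 1) = 2 * (2:ℝ) ^ m := by
        rw [Real.rpow_add (by norm_num), Real.rpow_one]; ring
      have rhs_eq : δ / 2 * (CR ^ m * ((2:ℝ) ^ (m + 1) * μ ^ m * δ⁻¹ * γ * R ^ (μ * (s - m) - m)))
            * (R ^ (μ * s) * r ^ (-(μ * s)))
          = γ * ((2:ℝ) ^ m * μ ^ m * CR ^ m)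
            * (R ^ (μ * (s - m) - m) * (R ^ (μ * s) * r ^ (-(μ * s)))) := by
        rw [h2m]; field_simp
      rw [rhs_eq, show γ * ((2:ℝ) ^ m * μ ^ m * CR ^ m * (R ^ (μ * m) * R ^ m * r ^ ((-μ - 1) * m)))
            = γ * ((2:ℝ) ^ m * μ ^ m * CR ^ m) * (R ^ (μ * m) * R ^ m * r ^ ((-μ - 1) * m)) by ring]
      exact mul_le_mul_of_nonneg_left hstep2 (by positivity)
    calc γ * (2 * (CR * R ^ μ * (μ * r ^ (-μ - 1))) * ρ) ^ m
        ≤ γ * ((2:ℝ) ^ m * μ ^ m * CR ^ m * (R ^ (μ * m) * R ^ m * r ^ ((-μ - 1) * m))) := by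
          rw [← hexp]; exact mul_le_mul_of_nonneg_left hbase hγ
      _ ≤ δ / 2 * (CR ^ m * ((2:ℝ) ^ (m + 1) * μ ^ m * δ⁻¹ * γ * R ^ (μ * (s - m) - m)))
          * (R ^ (μ * s) * r ^ (-(μ * s))) := hmain
      _ ≤ δ / 2 * (CR ^ m * CR ^ (s - m)) * (R ^ (μ * s) * r ^ (-(μ * s))) := by
          apply mul_le_mul_of_nonneg_right _ (by positivity)
          apply mul_le_mul_of_nonneg_left _ (by positivity)
          exact mul_le_mul_of_nonneg_left hC2 (by positivity)
      _ = δ / 2 * (CR * R ^ μ * r ^ (-μ)) ^ s := by rw [hVeq, hCRsm]; ring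
  have hA' := hA
  rw [hVeq, hCRs1] at hA'
  linarith [hA, hB]

/-! ### Derivative auxiliary lemmas -/

private def L0 (n : ℕ) : En n →L[ℝ] (En n →L[ℝ] ℝ) :=
  (isBoundedBilinearMap_inner (𝕜 := ℝ) (E := En n)).toContinuousLinearMap

@[simp] private lemma L0_apply {n : ℕ} (x y : En n) : L0 n x y = inner ℝ x y := rfl

private lemma hasFDerivAt_normsq {n : ℕ} (x : En n) :
    HasFDerivAt (fun y : En n => ‖y‖ ^ 2) ((2:ℝ) • (L0 n x)) x := by
  have h := (hasStrictFDerivAt_norm_sq x).hasFDerivAt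
  refine h.congr_fderiv ?_
  ext y
  simp [two_smul]

private def kk1 (CR R μ : ℝ) {n : ℕ} (y : En n) : ℝ :=
  CR * R ^ μ * (μ * (R ^ 2 - ‖y‖ ^ 2) ^ (-μ - 1))

private def kk2 (CR R μ : ℝ) {n : ℕ} (y : En n) : ℝ :=
  CR * R ^ μ * (μ * ((μ + 1) * (R ^ 2 - ‖y‖ ^ 2) ^ (-μ - 2)))

private lemma hder (R p u : ℝ) (hu : R ^ 2 - u ≠ 0) :
    HasDerivAt (fun t : ℝ => (R ^ 2 - t) ^ p) (-(p * (R ^ 2 - u) ^ (p - 1))) u := by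
  have h1 : HasDerivAt (fun t : ℝ => R ^ 2 - t) (-1) u := by
    simpa using (hasDerivAt_id u).const_sub (R ^ 2)
  have h2 := Real.hasDerivAt_rpow_const (x := R ^ 2 - u) (p := p) (Or.inl hu)
  have h3 := h2.comp u h1
  exact h3.congr_deriv (by ring)

private lemma psi_hasFDeriv (CR R μ : ℝ) {n : ℕ} (x : En n) (hx2 : 0 < R ^ 2 - ‖x‖ ^ 2) :
    HasFDerivAt (fun y : En n => CR * R ^ μ * (R ^ 2 - ‖y‖ ^ 2) ^ (-μ))
      (kk1 CR R μ x • ((2:ℝ) • (L0 n x))) x := by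
  have hg : HasDerivAt (fun t : ℝ => CR * R ^ μ * (R ^ 2 - t) ^ (-μ))
      (kk1 CR R μ x) (‖x‖ ^ 2) := by
    have h := (hder R (-μ) (‖x‖ ^ 2) hx2.ne').const_mul (CR * R ^ μ)
    exact h.congr_deriv (by simp only [kk1]; ring_nf)
  exact hg.comp_hasFDerivAt (f := fun y : En n => ‖y‖ ^ 2) x (hasFDerivAt_normsq x)

private lemma kk1_hasFDeriv (CR R μ : ℝ) {n : ℕ} (x : En n) (hx2 : 0 < R ^ 2 - ‖x‖ ^ 2) :
    HasFDerivAt (kk1 CR R μ (n := n)) (kk2 CR R μ x • ((2:ℝ) • (L0 n x))) x := by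
  have hg : HasDerivAt (fun t : ℝ => CR * R ^ μ * (μ * (R ^ 2 - t) ^ (-μ - 1)))
      (kk2 CR R μ x) (‖x‖ ^ 2) := by
    have h := ((hder R (-μ - 1) (‖x‖ ^ 2) hx2.ne').const_mul μ).const_mul (CR * R ^ μ)
    rw [show (-μ - 1 - 1 : ℝ) = -μ - 2 by ring] at h
    exact h.congr_deriv (by simp only [kk2]; ring_nf)
  exact hg.comp_hasFDerivAt (f := fun y : En n => ‖y‖ ^ 2) x (hasFDerivAt_normsq x)

private lemma G_hasFDeriv (CR R μ : ℝ) {n : ℕ} (x : En n) (hx2 : 0 < R ^ 2 - ‖x‖ ^ 2) :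
    HasFDerivAt (fun y : En n => kk1 CR R μ y • ((2:ℝ) • L0 n) y)
      (kk1 CR R μ x • ((2:ℝ) • L0 n)
        + (kk2 CR R μ x • ((2:ℝ) • L0 n x)).smulRight (((2:ℝ) • L0 n) x)) x := by
  have h1 := kk1_hasFDeriv CR R μ x hx2
  have h2 : HasFDerivAt (fun y : En n => ((2:ℝ) • L0 n) y) ((2:ℝ) • L0 n) x :=
    ((2:ℝ) • L0 n).hasFDerivAt
  have h3 : kk2 CR R μ x • ((2:ℝ) • (L0 n x)) = kk2 CR R μ x • (((2:ℝ) • L0 n) x) := rfl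
  rw [h3] at h1
  exact h1.smul h2

set_option maxHeartbeats 2000000 in
theorem osserman_barrier
    (n : ℕ) (hn : 1 ≤ n) (lam Lam m s R δ γ₁ γ μ a b CR : ℝ)
    (hlam : 0 < lam) (hlamLam : lam ≤ Lam)
    (hm : 1 ≤ m) (hms : m < s) (hR : 0 < R) (hδ : 0 < δ)
    (hγ₁ : 0 ≤ γ₁) (hγ : 0 ≤ γ)
    (hμ : μ = if m ≤ 2 * s / (s + 1) then 2 / (s - 1) else m / (s - m))
    (ha : a = (4 * μ * δ⁻¹ * max (Lam * (1 + (n : ℝ) + 2 * μ)) 1) ^ (1 / (s - 1)))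
    (hb : b = ((2 : ℝ) ^ (m + 1) * μ ^ m * δ⁻¹) ^ (1 / (s - m)))
    (hCR : CR = max (a * (1 + γ₁ * R) ^ (1 / (s - 1)) * R ^ (μ - 2 / (s - 1)))
      (b * γ ^ (1 / (s - m)) * R ^ (μ - m / (s - m))))
    (φR : En n → ℝ)
    (hφR : ∀ x : En n, ‖x‖ < R → φR x = CR * R ^ μ * (R ^ 2 - ‖x‖ ^ 2) ^ (-μ)) :
    ContDiffOn ℝ (⊤ : ℕ∞) φR (Metric.ball 0 R) ∧
    ∀ x : En n, ‖x‖ < R →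
      pucci lam Lam (hessianMatrix φR x) + γ₁ * ‖gradient φR x‖ +
        γ * ‖gradient φR x‖ ^ m - δ * (φR x) ^ s ≤ 0 := by
  -- basic scalar facts
  have hs1 : 1 < s := lt_of_le_of_lt hm hms
  have hs1' : (0:ℝ) < s - 1 := by linarith
  have hsm' : (0:ℝ) < s - m := by linarith
  have hmpos : (0:ℝ) < m := by linarith
  have hLam : 0 < Lam := lt_of_lt_of_le hlam hlamLam
  have hn1 : (1:ℝ) ≤ (n:ℝ) := by exact_mod_cast hn
  have hμpos : 0 < μ := by
    rw [hμ]; split_ifs with h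
    · positivity
    · positivity
  have hμ1 : 2 ≤ μ * (s - 1) := by
    rw [hμ]; split_ifs with h
    · rw [div_mul_cancel₀ _ hs1'.ne']
    · push_neg at h
      rw [div_lt_iff₀ (by linarith : (0:ℝ) < s + 1)] at h
      rw [div_mul_eq_mul_div, le_div_iff₀ hsm']
      nlinarith
  have hμ2 : m ≤ μ * (s - m) := by
    rw [hμ]; split_ifs with h
    · rw [le_div_iff₀ (by linarith : (0:ℝ) < s + 1)] at h
      rw [div_mul_eq_mul_div, le_div_iff₀ hs1']
      nlinarith
    · rw [div_mul_cancel₀ _ hsm'.ne']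
  set M := max (Lam * (1 + (n:ℝ) + 2 * μ)) 1 with hM
  have hM1 : (1:ℝ) ≤ M := le_max_right _ _
  have hMla : Lam * (1 + (n:ℝ) + 2 * μ) ≤ M := le_max_left _ _
  have hMpos : (0:ℝ) < M := by positivity
  have h1γ : (0:ℝ) < 1 + γ₁ * R := by positivity
  -- a, b, CR facts
  have habase : (0:ℝ) < 4 * μ * δ⁻¹ * M := by positivity
  have ha' : a ^ (s - 1) = 4 * μ * δ⁻¹ * M := by
    rw [ha, one_div, Real.rpow_inv_rpow habase.le hs1'.ne']
  have hapos : 0 < a := by rw [ha]; positivity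
  have hbbase : (0:ℝ) < (2:ℝ) ^ (m + 1) * μ ^ m * δ⁻¹ := by positivity
  have hb' : b ^ (s - m) = (2:ℝ) ^ (m + 1) * μ ^ m * δ⁻¹ := by
    rw [hb, one_div, Real.rpow_inv_rpow hbbase.le hsm'.ne']
  have hbpos : 0 < b := by rw [hb]; positivity
  have hA1pos : 0 < a * (1 + γ₁ * R) ^ (1 / (s - 1)) * R ^ (μ - 2 / (s - 1)) := by positivity
  have hCR1 : a * (1 + γ₁ * R) ^ (1 / (s - 1)) * R ^ (μ - 2 / (s - 1)) ≤ CR := by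
    rw [hCR]; exact le_max_left _ _
  have hCR2 : b * γ ^ (1 / (s - m)) * R ^ (μ - m / (s - m)) ≤ CR := by
    rw [hCR]; exact le_max_right _ _
  have hCRpos : 0 < CR := lt_of_lt_of_le hA1pos hCR1
  have hC1 : 4 * μ * δ⁻¹ * M * (1 + γ₁ * R) * R ^ (μ * (s - 1) - 2) ≤ CR ^ (s - 1) := by
    have h1 : (a * (1 + γ₁ * R) ^ (1 / (s - 1)) * R ^ (μ - 2 / (s - 1))) ^ (s - 1)
        ≤ CR ^ (s - 1) := Real.rpow_le_rpow hA1pos.le hCR1 hs1'.le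
    have hexp : (a * (1 + γ₁ * R) ^ (1 / (s - 1)) * R ^ (μ - 2 / (s - 1))) ^ (s - 1)
        = 4 * μ * δ⁻¹ * M * (1 + γ₁ * R) * R ^ (μ * (s - 1) - 2) := by
      rw [Real.mul_rpow (by positivity) (by positivity),
          Real.mul_rpow (by positivity) (by positivity),
          ha', one_div, Real.rpow_inv_rpow h1γ.le hs1'.ne',
          ← Real.rpow_mul hR.le,
          show (μ - 2 / (s - 1)) * (s - 1) = μ * (s - 1) - 2 by field_simp]
    rw [← hexp]; exact h1
  have hC2 : (2:ℝ) ^ (m + 1) * μ ^ m * δ⁻¹ * γ * R ^ (μ * (s - m) - m) ≤ CR ^ (s - m) := by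
    have h1 : (b * γ ^ (1 / (s - m)) * R ^ (μ - m / (s - m))) ^ (s - m)
        ≤ CR ^ (s - m) := Real.rpow_le_rpow (by positivity) hCR2 hsm'.le
    have hexp : (b * γ ^ (1 / (s - m)) * R ^ (μ - m / (s - m))) ^ (s - m)
        = (2:ℝ) ^ (m + 1) * μ ^ m * δ⁻¹ * γ * R ^ (μ * (s - m) - m) := by
      rw [Real.mul_rpow (by positivity) (by positivity),
          Real.mul_rpow (by positivity) (by positivity),
          hb', one_div, Real.rpow_inv_rpow hγ hsm'.ne',
          ← Real.rpow_mul hR.le,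
          show (μ - m / (s - m)) * (s - m) = μ * (s - m) - m by field_simp]
    rw [← hexp]; exact h1
  -- eventual equality with the smooth model function
  have hev : ∀ x : En n, ‖x‖ < R →
      φR =ᶠ[nhds x] fun y : En n => CR * R ^ μ * (R ^ 2 - ‖y‖ ^ 2) ^ (-μ) := by
    intro x hx
    filter_upwards [Metric.isOpen_ball.mem_nhds (mem_ball_zero_iff.2 hx)] with y hy
    exact hφR y (mem_ball_zero_iff.1 hy)
  have hpos2 : ∀ x : En n, ‖x‖ < R → 0 < R ^ 2 - ‖x‖ ^ 2 := by
    intro x hx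
    have h0 := norm_nonneg x
    nlinarith
  -- smoothness
  have hsmooth : ContDiffOn ℝ (⊤ : ℕ∞) φR (Metric.ball 0 R) := by
    apply ContDiffOn.congr _ (fun y hy => hφR y (mem_ball_zero_iff.1 hy))
    intro y hy
    have hy2 : 0 < R ^ 2 - ‖y‖ ^ 2 := hpos2 y (mem_ball_zero_iff.1 hy)
    have h1 : ContDiffAt ℝ (⊤ : ℕ∞) (fun y : En n => R ^ 2 - ‖y‖ ^ 2) y :=
      contDiffAt_const.sub (contDiffAt_id.norm_sq ℝ)
    have h2 : ContDiffAt ℝ (⊤ : ℕ∞) (fun y : En n => (R ^ 2 - ‖y‖ ^ 2) ^ (-μ)) y :=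
      h1.rpow_const_of_ne hy2.ne'
    exact (contDiffAt_const.mul h2).contDiffWithinAt
  refine ⟨hsmooth, ?_⟩
  intro x hx
  have hx2 : 0 < R ^ 2 - ‖x‖ ^ 2 := hpos2 x hx
  have hk1pos : 0 < kk1 CR R μ x := by
    rw [kk1]; positivity
  have hk2pos : 0 < kk2 CR R μ x := by
    rw [kk2]; positivity
  -- gradient
  have hfd : HasFDerivAt φR (kk1 CR R μ x • ((2:ℝ) • L0 n x)) x :=
    (psi_hasFDeriv CR R μ x hx2).congr_of_eventuallyEq (hev x hx)
  have hgrad : gradient φR x = (2 * kk1 CR R μ x) • x := by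
    have hg2 : HasGradientAt φR ((InnerProductSpace.toDual ℝ (En n)).symm
        (kk1 CR R μ x • ((2:ℝ) • L0 n x))) x := hfd.hasGradientAt
    have he : kk1 CR R μ x • ((2:ℝ) • L0 n x)
        = (InnerProductSpace.toDual ℝ (En n)) ((2 * kk1 CR R μ x) • x) := by
      apply ContinuousLinearMap.ext
      intro y
      simp only [InnerProductSpace.toDual_apply_apply, ContinuousLinearMap.smul_apply, L0_apply,
        smul_eq_mul, real_inner_smul_left]
      ring
    rw [hg2.gradient, he, LinearIsometryEquiv.symm_apply_apply]
  have hgn : ‖gradient φR x‖ = 2 * (CR * R ^ μ * (μ * (R ^ 2 - ‖x‖ ^ 2) ^ (-μ - 1))) * ‖x‖ := by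
    rw [hgrad, norm_smul, Real.norm_eq_abs, abs_of_nonneg (by positivity : (0:ℝ) ≤ 2 * kk1 CR R μ x)]
    rw [kk1]
  -- Hessian
  have hfev : fderiv ℝ φR =ᶠ[nhds x] fun y : En n => kk1 CR R μ y • ((2:ℝ) • L0 n) y := by
    filter_upwards [Metric.isOpen_ball.mem_nhds (mem_ball_zero_iff.2 hx)] with y hy
    have hy' : ‖y‖ < R := mem_ball_zero_iff.1 hy
    exact ((psi_hasFDeriv CR R μ y (hpos2 y hy')).congr_of_eventuallyEq (hev y hy')).fderiv
  have h2nd : fderiv ℝ (fderiv ℝ φR) x = kk1 CR R μ x • ((2:ℝ) • L0 n)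
      + (kk2 CR R μ x • ((2:ℝ) • L0 n x)).smulRight (((2:ℝ) • L0 n) x) := by
    rw [hfev.fderiv_eq]
    exact (G_hasFDeriv CR R μ x hx2).fderiv
  have hhess : hessianMatrix φR x
      = (2 * kk1 CR R μ x) • (1 : Matrix (Fin n) (Fin n) ℝ)
        + (4 * kk2 CR R μ x) • Matrix.vecMulVec (fun i => x i) (fun i => x i) := by
    ext i j
    show iteratedFDeriv ℝ 2 φR x ![EuclideanSpace.single i 1, EuclideanSpace.single j 1] = _
    rw [iteratedFDeriv_two_apply, h2nd]
    simp only [Matrix.cons_val_zero, Matrix.cons_val_one, Matrix.head_cons,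
      ContinuousLinearMap.add_apply, ContinuousLinearMap.smul_apply,
      ContinuousLinearMap.smulRight_apply, L0_apply, smul_eq_mul,
      Matrix.add_apply, Matrix.smul_apply, Matrix.one_apply, Matrix.vecMulVec_apply,
      EuclideanSpace.inner_single_left, EuclideanSpace.inner_single_right,
      map_one, one_mul, EuclideanSpace.single_apply]
    by_cases hij : i = j
    · simp [hij]; ring
    · simp [hij, Ne.symm hij]; ring
  -- PSD and trace
  have hXpsd : ((2 * kk1 CR R μ x) • (1 : Matrix (Fin n) (Fin n) ℝ)
      + (4 * kk2 CR R μ x) • Matrix.vecMulVec (fun i => x i) (fun i => x i)).PosSemidef :=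
    Matrix.PosSemidef.add (psd_smul (by positivity) Matrix.PosSemidef.one)
      (psd_smul (by positivity) (psd_vecMulVec _))
  have hnormsq : ‖x‖ ^ 2 = ∑ i, x i * x i := by
    rw [EuclideanSpace.norm_eq, Real.sq_sqrt (by positivity)]
    refine Finset.sum_congr rfl fun i _ => ?_
    rw [Real.norm_eq_abs, sq_abs, sq]
  have htr : ((2 * kk1 CR R μ x) • (1 : Matrix (Fin n) (Fin n) ℝ)
      + (4 * kk2 CR R μ x) • Matrix.vecMulVec (fun i => x i) (fun i => x i)).trace
      = 2 * kk1 CR R μ x * (n:ℝ) + 4 * kk2 CR R μ x * ‖x‖ ^ 2 := by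
    have hv : (Matrix.vecMulVec (fun i => x i) (fun i => x i)).trace = ‖x‖ ^ 2 := by
      rw [hnormsq]
      simp [Matrix.trace, Matrix.diag, Matrix.vecMulVec_apply]
    rw [Matrix.trace_add, Matrix.trace_smul, Matrix.trace_smul, Matrix.trace_one, hv]
    simp [smul_eq_mul]
  have hpucci : pucci lam Lam (hessianMatrix φR x)
      ≤ Lam * (2 * kk1 CR R μ x * (n:ℝ) + 4 * kk2 CR R μ x * ‖x‖ ^ 2) := by
    rw [hhess, ← htr]
    exact pucci_le hlam hlamLam hXpsd
  -- final scalar inequality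
  have hfinal := scalar_key (n:ℝ) μ s m R δ γ₁ γ Lam M CR ‖x‖ hn1 hμpos hs1 hm hms hR hδ
    hγ₁ hγ hLam hM1 hMla hμ1 hμ2 (norm_nonneg x) hx hCRpos hC1 hC2
    (r := R ^ 2 - ‖x‖ ^ 2) rfl
  rw [hgn, hφR x hx]
  have hk1e : kk1 CR R μ x = CR * R ^ μ * (μ * (R ^ 2 - ‖x‖ ^ 2) ^ (-μ - 1)) := rfl
  have hk2e : kk2 CR R μ x = CR * R ^ μ * (μ * ((μ + 1) * (R ^ 2 - ‖x‖ ^ 2) ^ (-μ - 2))) := rfl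
  rw [hk1e, hk2e] at hpucci
  linarith [hpucci, hfinal]
end
end

section
/- Let n ≥ 1, Λ > 0, δ > 0, γ₁, γ ≥ 0, R > 0 and 1 ≤ m < s. Set μ = 2/(s−1) if 1 ≤ m ≤ 2s/(s+1) and μ = m/(s−m) if 2s/(s+1) < m < s, let a = (4μδ⁻¹max{Λ(1+n+2μ),1})^{1/(s−1)}, b = (2^{m+1}μ^m δ⁻¹)^{1/(s−m)}, and C_R = max{ a(1+γ₁R)^{1/(s−1)} R^{μ−2/(s−1)}, b γ^{1/(s−m)} R^{μ−m/(s−m)} }. Then 2Λμ(1+n+2μ) R^{μ(s−1)−2} + 2γ₁μ R^{μ(s−1)−1} + (2μ)^m γ C_R^{m−1} R^{μ(s−m)−m} ≤ δ C_R^{s−1}. -/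
open Real

set_option maxHeartbeats 1000000 in
theorem osserman_core_inequality
    (n : ℕ) (hn : 1 ≤ n) (Lam m s R δ γ₁ γ μ a b CR : ℝ)
    (hLam : 0 < Lam) (hδ : 0 < δ) (hγ₁ : 0 ≤ γ₁) (hγ : 0 ≤ γ) (hR : 0 < R)
    (hm : 1 ≤ m) (hms : m < s)
    (hμ : μ = if m ≤ 2 * s / (s + 1) then 2 / (s - 1) else m / (s - m))
    (ha : a = (4 * μ * δ⁻¹ * max (Lam * (1 + (n : ℝ) + 2 * μ)) 1) ^ (1 / (s - 1)))
    (hb : b = ((2 : ℝ) ^ (m + 1) * μ ^ m * δ⁻¹) ^ (1 / (s - m)))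
    (hCR : CR = max (a * (1 + γ₁ * R) ^ (1 / (s - 1)) * R ^ (μ - 2 / (s - 1)))
      (b * γ ^ (1 / (s - m)) * R ^ (μ - m / (s - m)))) :
    2 * Lam * μ * (1 + (n : ℝ) + 2 * μ) * R ^ (μ * (s - 1) - 2) +
      2 * γ₁ * μ * R ^ (μ * (s - 1) - 1) +
      (2 * μ) ^ m * γ * CR ^ (m - 1) * R ^ (μ * (s - m) - m) ≤ δ * CR ^ (s - 1) := by
  have hs1' : (0:ℝ) < s - 1 := by linarith
  have hsm : (0:ℝ) < s - m := by linarith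
  have hμpos : 0 < μ := by
    rw [hμ]; split
    · exact div_pos two_pos hs1'
    · exact div_pos (by linarith) hsm
  set M := max (Lam * (1 + (n:ℝ) + 2*μ)) 1 with hM
  have hM1 : (1:ℝ) ≤ M := le_max_right _ _
  have hMLam : Lam * (1 + (n:ℝ) + 2*μ) ≤ M := le_max_left _ _
  have hMpos : 0 < M := lt_of_lt_of_le one_pos hM1
  have hgR : (0:ℝ) < 1 + γ₁ * R := by positivity
  have hapos : 0 < a := by
    rw [ha]
    have : 0 < 4 * μ * δ⁻¹ * M := by positivity
    positivity
  set A := a * (1 + γ₁ * R) ^ (1 / (s - 1)) * R ^ (μ - 2 / (s - 1)) with hA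
  set B := b * γ ^ (1 / (s - m)) * R ^ (μ - m / (s - m)) with hB
  have hApos : 0 < A := by rw [hA]; positivity
  have hbnn : 0 ≤ b := by rw [hb]; positivity
  have hBnn : 0 ≤ B := by rw [hB]; positivity
  have hCRA : A ≤ CR := by rw [hCR]; exact le_max_left _ _
  have hCRB : B ≤ CR := by rw [hCR]; exact le_max_right _ _
  have hCRpos : 0 < CR := lt_of_lt_of_le hApos hCRA
  -- a ^ (s-1)
  have haS : a ^ (s-1) = 4 * μ * δ⁻¹ * M := by
    rw [ha, one_div, Real.rpow_inv_rpow (by positivity) (ne_of_gt hs1')]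
  have hAS : A ^ (s-1) = (4 * μ * δ⁻¹ * M) * (1 + γ₁ * R) * R ^ (μ*(s-1) - 2) := by
    rw [hA, Real.mul_rpow (by positivity) (Real.rpow_nonneg hR.le _),
        Real.mul_rpow hapos.le (Real.rpow_nonneg hgR.le _),
        haS, one_div, Real.rpow_inv_rpow hgR.le (ne_of_gt hs1'),
        ← Real.rpow_mul hR.le]
    congr 1
    field_simp
  -- B ^ (s-m)
  have hBS : B ^ (s-m) = ((2:ℝ) ^ (m+1) * μ ^ m * δ⁻¹) * γ * R ^ (μ*(s-m) - m) := by
    rw [hB, Real.mul_rpow (by positivity) (Real.rpow_nonneg hR.le _),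
        Real.mul_rpow hbnn (Real.rpow_nonneg hγ _),
        hb, one_div, Real.rpow_inv_rpow (by positivity) (ne_of_gt hsm),
        Real.rpow_inv_rpow hγ (ne_of_gt hsm),
        ← Real.rpow_mul hR.le]
    congr 1
    field_simp
  -- first two terms bounded by (δ/2) * A^(s-1)
  have hRp : 0 < R ^ (μ*(s-1) - 2) := Real.rpow_pos_of_pos hR _
  have hR1 : R ^ (μ*(s-1) - 1) = R ^ (μ*(s-1) - 2) * R := by
    rw [show μ*(s-1) - 1 = (μ*(s-1) - 2) + 1 by ring, Real.rpow_add_one hR.ne']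
  have hfirst : 2 * Lam * μ * (1 + (n : ℝ) + 2 * μ) * R ^ (μ * (s - 1) - 2) +
      2 * γ₁ * μ * R ^ (μ * (s - 1) - 1) ≤ δ / 2 * A ^ (s-1) := by
    rw [hAS, hR1]
    have hδδ : δ * δ⁻¹ = 1 := mul_inv_cancel₀ hδ.ne'
    have key : δ / 2 * ((4 * μ * δ⁻¹ * M) * (1 + γ₁ * R) * R ^ (μ*(s-1) - 2))
        = 2 * μ * M * R ^ (μ*(s-1) - 2) + 2 * μ * M * γ₁ * (R ^ (μ*(s-1) - 2) * R) := by
      rw [show δ / 2 * ((4 * μ * δ⁻¹ * M) * (1 + γ₁ * R) * R ^ (μ*(s-1) - 2))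
          = (δ * δ⁻¹) * (2 * μ * M * (1 + γ₁ * R) * R ^ (μ*(s-1) - 2)) from by ring, hδδ]
      ring
    rw [key]
    have h1 : 2 * Lam * μ * (1 + (n : ℝ) + 2 * μ) * R ^ (μ * (s - 1) - 2)
        ≤ 2 * μ * M * R ^ (μ*(s-1) - 2) := by
      have := mul_le_mul_of_nonneg_left hMLam (by positivity : (0:ℝ) ≤ 2 * μ * R ^ (μ*(s-1)-2))
      nlinarith
    have h2 : 2 * γ₁ * μ * (R ^ (μ * (s - 1) - 2) * R)
        ≤ 2 * μ * M * γ₁ * (R ^ (μ*(s-1) - 2) * R) := by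
      have := mul_le_mul_of_nonneg_left hM1
        (by positivity : (0:ℝ) ≤ 2 * μ * γ₁ * (R ^ (μ*(s-1)-2) * R))
      nlinarith
    linarith
  -- third term bounded by (δ/2) * CR^(s-1)
  have hCRm : 0 ≤ CR ^ (m-1) := (Real.rpow_pos_of_pos hCRpos _).le
  have hthird : (2 * μ) ^ m * γ * CR ^ (m - 1) * R ^ (μ * (s - m) - m)
      ≤ δ / 2 * CR ^ (s-1) := by
    have hsplit : CR ^ (s-1) = CR ^ (s-m) * CR ^ (m-1) := by
      rw [← Real.rpow_add hCRpos]; ring_nf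
    have hle : B ^ (s-m) ≤ CR ^ (s-m) := Real.rpow_le_rpow hBnn hCRB hsm.le
    have h2m : (2 * μ) ^ m = 2 ^ m * μ ^ m := Real.mul_rpow (by norm_num) hμpos.le
    have h2m1 : (2:ℝ) ^ (m+1) = 2 ^ m * 2 := Real.rpow_add_one (by norm_num) m
    have key : δ / 2 * (B ^ (s-m) * CR ^ (m-1))
        = (2 * μ) ^ m * γ * CR ^ (m - 1) * R ^ (μ * (s - m) - m) := by
      have hδδ : δ * δ⁻¹ = 1 := mul_inv_cancel₀ hδ.ne'
      rw [hBS, h2m, h2m1,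
        show δ / 2 * ((2:ℝ) ^ m * 2 * μ ^ m * δ⁻¹ * γ * R ^ (μ*(s-m) - m) * CR ^ (m-1))
          = (δ * δ⁻¹) * ((2:ℝ) ^ m * μ ^ m * γ * CR ^ (m-1) * R ^ (μ*(s-m) - m)) from by ring,
        hδδ]
      ring
    rw [hsplit]
    calc (2 * μ) ^ m * γ * CR ^ (m - 1) * R ^ (μ * (s - m) - m)
        = δ / 2 * (B ^ (s-m) * CR ^ (m-1)) := key.symm
      _ ≤ δ / 2 * (CR ^ (s-m) * CR ^ (m-1)) := by
          apply mul_le_mul_of_nonneg_left _ (by positivity)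
          exact mul_le_mul_of_nonneg_right hle hCRm
  have hACR : A ^ (s-1) ≤ CR ^ (s-1) := Real.rpow_le_rpow hApos.le hCRA hs1'.le
  have : δ / 2 * A ^ (s-1) ≤ δ / 2 * CR ^ (s-1) :=
    mul_le_mul_of_nonneg_left hACR (by positivity)
  linarith
end

section
/- Let n ≥ 1, let i ∈ {1,…,n}, let α ≥ 0 and let ε ∈ {1,−1}. Define u : ℝⁿ → ℝ by u(x) = α·exp(ε√2·x_i) + 1. Then u is smooth, u > 0, and at every point x ∈ ℝⁿ it satisfies Δu(x) + (1/2)‖∇u(x)‖² − |u(x)|·u(x) = −1, where Δu is the Laplacian (the sum of the second partial derivatives), ∇u the gradient, and ‖·‖ the Euclidean norm. -/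
noncomputable section
open Real

theorem nonuniqueness_family_convex
    (n : ℕ) (hn : 1 ≤ n) (i : Fin n) (α ε : ℝ) (hα : 0 ≤ α)
    (hε : ε = 1 ∨ ε = -1) (u : En n → ℝ)
    (hu : ∀ x : En n, u x = α * Real.exp (ε * Real.sqrt 2 * x i) + 1) :
    ContDiff ℝ (⊤ : ℕ∞) u ∧ (∀ x, 0 < u x) ∧
    ∀ x : En n,
      (hessianMatrix u x).trace + (1 / 2) * ‖gradient u x‖ ^ 2 - |u x| * u x = -1 := by
  set c : ℝ := ε * Real.sqrt 2 with hc
  have hc2 : c * c = 2 := by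
    rcases hε with h | h <;>
      simp [hc, h, mul_mul_mul_comm, Real.mul_self_sqrt (by norm_num : (2:ℝ) ≥ 0)]
  set g : ℝ → ℝ := fun t => α * Real.exp (c * t) + 1 with hgdef
  have hgc : ContDiff ℝ (⊤ : ℕ∞) g := by
    apply ContDiff.add _ contDiff_const
    exact contDiff_const.mul (Real.contDiff_exp.comp (contDiff_const.mul contDiff_id))
  have hu' : u = g ∘ ⇑(EuclideanSpace.proj (𝕜 := ℝ) i) := by
    funext x; simp [hu x, hgdef]
  have hG1 : ∀ t : ℝ, HasDerivAt g (α * c * Real.exp (c * t)) t := by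
    intro t
    have h1 : HasDerivAt (fun t : ℝ => c * t) c t := by
      simpa using (hasDerivAt_id t).const_mul c
    have h2 := (Real.hasDerivAt_exp (c * t)).comp t h1
    have := (h2.const_mul α).add_const 1
    exact this.congr_deriv (by ring)
  have hG2 : ∀ t : ℝ, HasDerivAt (fun s => α * c * Real.exp (c * s)) (2 * α * Real.exp (c * t)) t := by
    intro t
    have h1 : HasDerivAt (fun t : ℝ => c * t) c t := by
      simpa using (hasDerivAt_id t).const_mul c
    have h2 := (Real.hasDerivAt_exp (c * t)).comp t h1
    have := h2.const_mul (α * c)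
    exact this.congr_deriv (by rw [← hc2]; ring)
  have hd1 : deriv g = fun t => α * c * Real.exp (c * t) := funext fun t => (hG1 t).deriv
  have hd2 : ∀ t, iteratedDeriv 2 g t = 2 * α * Real.exp (c * t) := by
    intro t
    rw [show (2:ℕ) = 1 + 1 from rfl, iteratedDeriv_succ, iteratedDeriv_one, hd1]
    exact (hG2 t).deriv
  have husmooth : ContDiff ℝ (⊤ : ℕ∞) u := by
    rw [hu']; exact hgc.comp (EuclideanSpace.proj (𝕜 := ℝ) i : En n →L[ℝ] ℝ).contDiff
  have hpos : ∀ x, 0 < u x := by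
    intro x
    rw [hu x]
    have := mul_nonneg hα (Real.exp_pos (c * x i)).le
    linarith
  refine ⟨husmooth, hpos, ?_⟩
  intro x
  -- Hessian trace
  have hH : (hessianMatrix u x).trace = 2 * α * Real.exp (c * x i) := by
    have hcomp := (EuclideanSpace.proj (𝕜 := ℝ) i).iteratedFDeriv_comp_right hgc x
      (i := 2) (by norm_cast)
    rw [← hu'] at hcomp
    have hentry : ∀ j k : Fin n, hessianMatrix u x j k =
        (if j = i then (1:ℝ) else 0) * ((if k = i then (1:ℝ) else 0) *
          iteratedDeriv 2 g (x i)) := by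
      intro j k
      rw [hessianMatrix, hcomp, ContinuousMultilinearMap.compContinuousLinearMap_apply]
      rw [iteratedFDeriv_apply_eq_iteratedDeriv_mul_prod]
      simp only [Fin.prod_univ_two, Matrix.cons_val_zero, Matrix.cons_val_one, Matrix.head_cons,
        smul_eq_mul]
      have hp : ∀ j : Fin n, (EuclideanSpace.proj (𝕜 := ℝ) i) (EuclideanSpace.single j (1:ℝ))
          = if j = i then (1:ℝ) else 0 := by
        intro j
        rcases eq_or_ne j i with h | h
        · simp [h, EuclideanSpace.single_apply]
        · simp [EuclideanSpace.single_apply, h, h.symm]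
      have hx : (EuclideanSpace.proj (𝕜 := ℝ) i) x = x i := rfl
      rw [hp j, hp k, hx]; ring
    have hsum : ∀ j : Fin n, (if j = i then (1:ℝ) else 0) *
        ((if j = i then (1:ℝ) else 0) * iteratedDeriv 2 g (x i)) =
        if j = i then iteratedDeriv 2 g (x i) else 0 := by
      intro j; split_ifs <;> ring
    rw [Matrix.trace]
    simp only [Matrix.diag]
    rw [Finset.sum_congr rfl (fun j _ => (hentry j j).trans (hsum j)),
      Finset.sum_ite_eq' Finset.univ i, if_pos (Finset.mem_univ i), hd2]
  -- gradient
  have hgrad : gradient u x = (α * c * Real.exp (c * x i)) • EuclideanSpace.single i (1:ℝ) := by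
    have hfd : HasFDerivAt u
        ((α * c * Real.exp (c * x i)) • (EuclideanSpace.proj (𝕜 := ℝ) i)) x := by
      have h1 := (hG1 (x i)).hasFDerivAt
      have h2 := h1.comp x (EuclideanSpace.proj (𝕜 := ℝ) i).hasFDerivAt
      rw [← hu'] at h2
      refine h2.congr_fderiv ?_
      ext v
      simp [mul_comm]
    rw [gradient, hfd.fderiv, map_smul]
    congr 1
    have hL : (EuclideanSpace.proj (𝕜 := ℝ) i : StrongDual ℝ (En n)) =
        InnerProductSpace.toDual ℝ (En n) (EuclideanSpace.single i 1) := by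
      ext v
      simp [InnerProductSpace.toDual_apply_apply, EuclideanSpace.inner_single_left]
    rw [hL, LinearIsometryEquiv.symm_apply_apply]
  have hnorm : ‖gradient u x‖ ^ 2 = (α * c * Real.exp (c * x i)) ^ 2 := by
    rw [hgrad, norm_smul, EuclideanSpace.norm_single, norm_one, mul_one, Real.norm_eq_abs, sq_abs]
  rw [hH, hnorm, abs_of_pos (hpos x), hu x]
  linear_combination (α ^ 2 * Real.exp (c * x i) ^ 2 / 2) * hc2

end
end

section
/- Let n ≥ 1, let i ∈ {1,…,n}, let α ≥ 0 and let ε ∈ {1,−1}. Define v : ℝⁿ → ℝ by v(x) = −α·exp(ε√2·x_i) − 1. Then v is smooth, v < 0, and at every point x ∈ ℝⁿ it satisfies Δv(x) − (1/2)‖∇v(x)‖² − |v(x)|·v(x) = 1, where Δv is the Laplacian (the sum of the second partial derivatives), ∇v the gradient, and ‖·‖ the Euclidean norm. -/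
noncomputable section
open Real

theorem nonuniqueness_family_concave
    (n : ℕ) (hn : 1 ≤ n) (i : Fin n) (α ε : ℝ) (hα : 0 ≤ α)
    (hε : ε = 1 ∨ ε = -1) (v : En n → ℝ)
    (hv : ∀ x : En n, v x = -(α * Real.exp (ε * Real.sqrt 2 * x i)) - 1) :
    ContDiff ℝ (⊤ : ℕ∞) v ∧ (∀ x, v x < 0) ∧
    ∀ x : En n,
      (hessianMatrix v x).trace - (1 / 2) * ‖gradient v x‖ ^ 2 - |v x| * v x = 1 := by
  set c : ℝ := ε * Real.sqrt 2 with hc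
  have hc2 : c ^ 2 = 2 := by
    rcases hε with h | h <;> rw [hc, h, mul_pow, Real.sq_sqrt (by norm_num : (0:ℝ) ≤ 2)] <;>
      norm_num
  set L : En n →L[ℝ] ℝ := EuclideanSpace.proj i with hL
  have hLapp : ∀ y : En n, L y = y i := fun y => rfl
  have hveq : v = (fun t : ℝ => -(α * Real.exp (c * t)) - 1) ∘ (⇑L) := by
    funext y
    simp [hv y, Function.comp, hLapp]
  -- derivative of exp (c * t)
  have hexp : ∀ t : ℝ, HasDerivAt (fun t => Real.exp (c * t)) (c * Real.exp (c * t)) t := by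
    intro t
    simpa [mul_comm] using ((hasDerivAt_id t).const_mul c).exp
  -- first derivative
  have hv1 : ∀ x : En n, HasFDerivAt v ((-(α * c * Real.exp (c * x i))) • L) x := by
    intro x
    have hg : HasDerivAt (fun t : ℝ => -(α * Real.exp (c * t)) - 1)
        (-(α * c * Real.exp (c * x i))) (x i) := by
      have h := (((hexp (x i)).const_mul α).neg).sub_const 1
      refine h.congr_deriv ?_
      ring
    have h := hg.comp_hasFDerivAt x (L.hasFDerivAt)
    rw [hveq]
    exact h
  have hf1 : (fun x : En n => fderiv ℝ v x)
      = (fun t : ℝ => (-(α * c * Real.exp (c * t))) • L) ∘ (⇑L) := by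
    funext x
    simp [Function.comp, hLapp, (hv1 x).fderiv]
  -- second derivative
  have hv2 : ∀ x : En n, HasFDerivAt (fun y => fderiv ℝ v y)
      (((1 : ℝ →L[ℝ] ℝ).smulRight ((-(α * c * (c * Real.exp (c * x i)))) • L)).comp L) x := by
    intro x
    have hs : HasDerivAt (fun t : ℝ => (-(α * c * Real.exp (c * t))) • L)
        ((-(α * c * (c * Real.exp (c * x i)))) • L) (x i) := by
      exact ((((hexp (x i)).const_mul (α * c)).neg)).smul_const L
    have h := (hs.hasFDerivAt).comp x (L.hasFDerivAt)
    rw [hf1]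
    exact h
  -- Hessian entries
  have hHess : ∀ (x : En n) (j k : Fin n),
      hessianMatrix v x j k
        = (EuclideanSpace.single j (1:ℝ) i) *
            ((-(α * c * (c * Real.exp (c * x i)))) * (EuclideanSpace.single k (1:ℝ) i)) := by
    intro x j k
    rw [hessianMatrix, iteratedFDeriv_two_apply, (hv2 x).fderiv]
    simp only [Matrix.cons_val_zero, Matrix.cons_val_one, Matrix.head_cons,
      ContinuousLinearMap.comp_apply, ContinuousLinearMap.smulRight_apply,
      ContinuousLinearMap.one_apply, ContinuousLinearMap.coe_smul', Pi.smul_apply,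
      smul_eq_mul, one_mul, hLapp]
  have htrace : ∀ x : En n, (hessianMatrix v x).trace
      = -(α * c * (c * Real.exp (c * x i))) := by
    intro x
    rw [Matrix.trace]
    simp only [Matrix.diag_apply, hHess]
    rw [Finset.sum_eq_single i]
    · simp
    · intro j _ hj
      simp [EuclideanSpace.single_apply, (Ne.symm hj : ¬ i = j)]
    · simp
  -- gradient
  have hgrad : ∀ x : En n, gradient v x
      = (-(α * c * Real.exp (c * x i))) • EuclideanSpace.single i (1:ℝ) := by
    intro x
    have hG : HasGradientAt v
        ((-(α * c * Real.exp (c * x i))) • EuclideanSpace.single i (1:ℝ)) x := by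
      rw [hasGradientAt_iff_hasFDerivAt]
      have heq : (InnerProductSpace.toDual ℝ (En n))
          ((-(α * c * Real.exp (c * x i))) • EuclideanSpace.single i (1:ℝ))
          = (-(α * c * Real.exp (c * x i))) • L := by
        ext y
        simp [InnerProductSpace.toDual_apply_apply, real_inner_smul_left,
          EuclideanSpace.inner_single_left, hLapp]
      rw [heq]
      exact hv1 x
    exact hG.gradient
  have hnormgrad : ∀ x : En n, ‖gradient v x‖ ^ 2 = 2 * (α * Real.exp (c * x i)) ^ 2 := by
    intro x
    have h1 : ‖gradient v x‖ ^ 2 = (α * c * Real.exp (c * x i)) ^ 2 := by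
      rw [hgrad x, norm_smul, EuclideanSpace.norm_single, Real.norm_eq_abs, Real.norm_eq_abs,
        mul_pow, sq_abs, sq_abs]
      ring
    rw [h1]
    linear_combination (α * Real.exp (c * x i)) ^ 2 * hc2
  refine ⟨?_, ?_, ?_⟩
  · rw [hveq]
    exact ((contDiff_const.mul (Real.contDiff_exp.comp
      (contDiff_const.mul contDiff_id))).neg.sub contDiff_const).comp L.contDiff
  · intro x
    rw [hv x]
    have := mul_nonneg hα (Real.exp_pos (ε * Real.sqrt 2 * x i)).le
    linarith
  · intro x
    have hE : (0:ℝ) < Real.exp (c * x i) := Real.exp_pos _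
    have hvx : v x = -(α * Real.exp (c * x i)) - 1 := hv x
    have hvneg : v x < 0 := by
      have := mul_nonneg hα hE.le
      rw [hvx]; linarith
    rw [htrace x, hnormgrad x, abs_of_neg hvneg, hvx]
    linear_combination (-(α * Real.exp (c * x i))) * hc2
end
end

section
/- Let m > 1, 0 < l < m, σ₀ ∈ (0,1), c̄ > 0 and M ≥ 0. Let c, a : ℝⁿ → ℝ satisfy c(x) ≥ c̄ and |a(x)| ≤ M for all x, and define H : ℝⁿ × ℝⁿ → ℝ by H(x,p) = c(x)|p|^m + a(x)|p|^l. Then there exists a constant C > 0, depending only on c̄, M, σ₀, m and l, such that for all x, p ∈ ℝⁿ and all σ ∈ (σ₀,1), H(x,p) − σH(x,σ⁻¹p) ≤ (1−σ)( −(c̄(m−1)/2)|p|^m + C ). -/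
noncomputable section
open Real

/-- If `0 ≤ k` and `0 < σ ≤ 1` then `1 - σ^k ≤ (1+k)(1-σ)`. -/
lemma aux_upper (k σ : ℝ) (hk : 0 ≤ k) (h0 : 0 < σ) (h1 : σ ≤ 1) :
    1 - σ ^ k ≤ (1 + k) * (1 - σ) := by
  rcases le_or_gt k 1 with hk1 | hk1
  · have h : σ ^ (1 : ℝ) ≤ σ ^ k := Real.rpow_le_rpow_of_exponent_ge h0 h1 hk1
    rw [Real.rpow_one] at h
    nlinarith
  · have h := one_add_mul_self_le_rpow_one_add (s := σ - 1) (p := k) (by linarith) hk1.le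
    have e : (1 : ℝ) + (σ - 1) = σ := by ring
    rw [e] at h
    nlinarith

/-- If `0 ≤ k` and `0 < σ ≤ 1` then `k(1-σ) ≤ σ^(-k) - 1`. -/
lemma aux_lower (k σ : ℝ) (hk : 0 ≤ k) (h0 : 0 < σ) (h1 : σ ≤ 1) :
    k * (1 - σ) ≤ σ ^ (-k) - 1 := by
  have hpos : 0 < σ ^ k := Real.rpow_pos_of_pos h0 k
  rcases le_or_gt k 1 with hk1 | hk1
  · have h := rpow_one_add_le_one_add_mul_self (s := σ - 1) (p := k) (by linarith) hk hk1
    have e : (1 : ℝ) + (σ - 1) = σ := by ring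
    rw [e] at h
    rw [Real.rpow_neg h0.le, le_sub_iff_add_le, inv_eq_one_div, le_div_iff₀ hpos]
    nlinarith [sq_nonneg (k * (1 - σ))]
  · have h := one_add_mul_self_le_rpow_one_add (s := σ⁻¹ - 1) (p := k) (by
      have : 0 < σ⁻¹ := inv_pos.2 h0
      linarith) hk1.le
    have e : (1 : ℝ) + (σ⁻¹ - 1) = σ⁻¹ := by ring
    rw [e] at h
    have hinv : σ ^ (-k) = (σ⁻¹) ^ k := by
      rw [Real.rpow_neg h0.le, ← Real.inv_rpow h0.le]
    rw [hinv]
    have hσinv : σ * σ⁻¹ = 1 := mul_inv_cancel₀ h0.ne'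
    have hge : 1 - σ ≤ σ⁻¹ - 1 := by nlinarith [sq_nonneg (1 - σ)]
    nlinarith


/-- Scalar core of the estimate. -/
lemma core_estimate (m l σ₀ cbar M : ℝ) (hm : 1 < m) (hl0 : 0 < l) (hlm : l < m)
    (hσ₀0 : 0 < σ₀) (hσ₀1 : σ₀ < 1) (hcbar : 0 < cbar) (hM : 0 ≤ M) :
    ∃ C > (0 : ℝ), ∀ (cx ax r σ : ℝ), cbar ≤ cx → |ax| ≤ M → 0 ≤ r →
      σ₀ < σ → σ < 1 →
      cx * r ^ m * (1 - σ ^ (1 - m)) + ax * r ^ l * (1 - σ ^ (1 - l)) ≤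
        (1 - σ) * (-(cbar * (m - 1) / 2) * r ^ m + C) := by
  set K₀ : ℝ := (2 + l) * (1 + σ₀ ^ (1 - l)) with hK₀def
  have hs₀ : 0 < σ₀ ^ (1 - l) := Real.rpow_pos_of_pos hσ₀0 _
  have hK₀pos : 0 < K₀ := by
    have : (0:ℝ) < 2 + l := by linarith
    exact mul_pos this (by linarith)
  set K₁ : ℝ := M * K₀ + 1 with hK₁def
  have hK₁pos : 0 < K₁ := by
    have : 0 ≤ M * K₀ := mul_nonneg hM hK₀pos.le
    simp only [hK₁def]; linarith
  set b : ℝ := cbar * (m - 1) / 2 with hbdef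
  have hbpos : 0 < b := by
    simp only [hbdef]; nlinarith
  set R : ℝ := (K₁ / b) ^ (m - l)⁻¹ with hRdef
  have hKb : 0 < K₁ / b := div_pos hK₁pos hbpos
  have hRpos : 0 < R := Real.rpow_pos_of_pos hKb _
  set C : ℝ := K₁ * R ^ l + 1 with hCdef
  have hCpos : 0 < C := by
    have : 0 < K₁ * R ^ l := mul_pos hK₁pos (Real.rpow_pos_of_pos hRpos l)
    simp only [hCdef]; linarith
  -- key polynomial bound
  have hC : ∀ r : ℝ, 0 ≤ r → K₁ * r ^ l ≤ b * r ^ m + C := by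
    intro r hr
    rcases le_total r R with hrR | hRr
    · have h1 : r ^ l ≤ R ^ l := Real.rpow_le_rpow hr hrR hl0.le
      have h2 : K₁ * r ^ l ≤ K₁ * R ^ l := mul_le_mul_of_nonneg_left h1 hK₁pos.le
      have h3 : 0 ≤ b * r ^ m := mul_nonneg hbpos.le (Real.rpow_nonneg hr m)
      simp only [hCdef]; linarith
    · have hr0 : 0 < r := lt_of_lt_of_le hRpos hRr
      have hRml : R ^ (m - l) = K₁ / b := by
        rw [hRdef, ← Real.rpow_mul hKb.le, inv_mul_cancel₀ (by linarith : m - l ≠ 0),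
          Real.rpow_one]
      have h1 : R ^ (m - l) ≤ r ^ (m - l) :=
        Real.rpow_le_rpow hRpos.le hRr (by linarith)
      rw [hRml] at h1
      have h2 : r ^ m = r ^ (m - l) * r ^ l := by
        rw [← Real.rpow_add hr0]; ring_nf
      have h3 : 0 ≤ r ^ l := Real.rpow_nonneg hr l
      have h4 : (K₁ / b) * r ^ l ≤ r ^ (m - l) * r ^ l :=
        mul_le_mul_of_nonneg_right h1 h3
      have h5 : b * ((K₁ / b) * r ^ l) = K₁ * r ^ l := by
        field_simp
      have h6 := mul_le_mul_of_nonneg_left h4 hbpos.le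
      rw [h5] at h6
      rw [h2]
      linarith [hCpos, h6]
  refine ⟨C, hCpos, ?_⟩
  intro cx ax r σ hc ha hr hσl hσu
  have hσpos : 0 < σ := lt_trans hσ₀0 hσl
  have hσ1 : σ ≤ 1 := hσu.le
  -- c-term bound
  have h1σm : 1 - σ ^ (1 - m) ≤ -((m - 1) * (1 - σ)) := by
    have h := aux_lower (m - 1) σ (by linarith) hσpos hσ1
    rw [show -(m - 1) = 1 - m by ring] at h
    linarith
  have hnegm : 1 - σ ^ (1 - m) ≤ 0 := by
    have h0 : 0 ≤ (m - 1) * (1 - σ) := mul_nonneg (by linarith) (by linarith)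
    linarith
  have hrm : 0 ≤ r ^ m := Real.rpow_nonneg hr m
  have hrl : 0 ≤ r ^ l := Real.rpow_nonneg hr l
  have ht1 : cx * r ^ m * (1 - σ ^ (1 - m)) ≤ cbar * (-((m - 1) * (1 - σ))) * r ^ m := by
    have hab : cx * (1 - σ ^ (1 - m)) ≤ cbar * (-((m - 1) * (1 - σ))) :=
      (mul_le_mul_of_nonpos_right hc hnegm).trans
        (mul_le_mul_of_nonneg_left h1σm hcbar.le)
    calc cx * r ^ m * (1 - σ ^ (1 - m)) = (cx * (1 - σ ^ (1 - m))) * r ^ m := by ring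
      _ ≤ (cbar * (-((m - 1) * (1 - σ)))) * r ^ m := mul_le_mul_of_nonneg_right hab hrm
  -- a-term bound
  have habs : |1 - σ ^ (1 - l)| ≤ K₀ * (1 - σ) := by
    rcases le_or_gt l 1 with hl1 | hl1
    · have hle1 : σ ^ (1 - l) ≤ 1 := Real.rpow_le_one hσpos.le hσ1 (by linarith)
      rw [abs_of_nonneg (by linarith)]
      have h := aux_upper (1 - l) σ (by linarith) hσpos hσ1
      have h2 : (1 + (1 - l)) * (1 - σ) ≤ K₀ * (1 - σ) := by
        have hfac : 1 + (1 - l) ≤ K₀ := by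
          simp only [hK₀def]
          calc 1 + (1 - l) ≤ 2 + l := by linarith
            _ ≤ (2 + l) * (1 + σ₀ ^ (1 - l)) :=
              le_mul_of_one_le_right (by linarith) (by linarith [hs₀.le])
        exact mul_le_mul_of_nonneg_right hfac (by linarith)
      linarith
    · have hge1 : 1 ≤ σ ^ (1 - l) :=
        Real.one_le_rpow_of_pos_of_le_one_of_nonpos hσpos hσ1 (by linarith)
      rw [abs_of_nonpos (by linarith), neg_sub]
      have hprod : σ ^ (1 - l) * σ ^ (l - 1) = 1 := by
        rw [← Real.rpow_add hσpos]; norm_num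
      have hσσ₀ : σ ^ (1 - l) ≤ σ₀ ^ (1 - l) :=
        Real.rpow_le_rpow_of_nonpos hσ₀0 hσl.le (by linarith)
      have hle1' : σ ^ (l - 1) ≤ 1 := Real.rpow_le_one hσpos.le hσ1 (by linarith)
      have h := aux_upper (l - 1) σ (by linarith) hσpos hσ1
      have step1 : σ ^ (1 - l) - 1 = σ ^ (1 - l) * (1 - σ ^ (l - 1)) := by
        rw [mul_sub, mul_one, hprod]
      have step2 : σ ^ (1 - l) * (1 - σ ^ (l - 1)) ≤ σ₀ ^ (1 - l) * (1 - σ ^ (l - 1)) :=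
        mul_le_mul_of_nonneg_right hσσ₀ (by linarith)
      have step3 : σ₀ ^ (1 - l) * (1 - σ ^ (l - 1)) ≤ σ₀ ^ (1 - l) * ((1 + (l - 1)) * (1 - σ)) :=
        mul_le_mul_of_nonneg_left h hs₀.le
      have step4 : σ₀ ^ (1 - l) * ((1 + (l - 1)) * (1 - σ)) ≤ K₀ * (1 - σ) := by
        have hfac : σ₀ ^ (1 - l) * (1 + (l - 1)) ≤ K₀ := by
          simp only [hK₀def]
          calc σ₀ ^ (1 - l) * (1 + (l - 1)) = l * σ₀ ^ (1 - l) := by ring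
            _ ≤ (2 + l) * σ₀ ^ (1 - l) := mul_le_mul_of_nonneg_right (by linarith) hs₀.le
            _ ≤ (2 + l) * (1 + σ₀ ^ (1 - l)) :=
              mul_le_mul_of_nonneg_left (by linarith [hs₀.le]) (by linarith)
        calc σ₀ ^ (1 - l) * ((1 + (l - 1)) * (1 - σ))
            = (σ₀ ^ (1 - l) * (1 + (l - 1))) * (1 - σ) := by ring
          _ ≤ K₀ * (1 - σ) := mul_le_mul_of_nonneg_right hfac (by linarith)
      linarith
  have ht2 : ax * r ^ l * (1 - σ ^ (1 - l)) ≤ M * K₀ * (1 - σ) * r ^ l := by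
    have h1 : ax * (1 - σ ^ (1 - l)) ≤ |ax| * |1 - σ ^ (1 - l)| := by
      calc ax * (1 - σ ^ (1 - l)) ≤ |ax * (1 - σ ^ (1 - l))| := le_abs_self _
        _ = |ax| * |1 - σ ^ (1 - l)| := abs_mul _ _
    have h2 : |ax| * |1 - σ ^ (1 - l)| ≤ M * (K₀ * (1 - σ)) :=
      mul_le_mul ha habs (abs_nonneg _) hM
    calc ax * r ^ l * (1 - σ ^ (1 - l)) = (ax * (1 - σ ^ (1 - l))) * r ^ l := by ring
      _ ≤ (M * (K₀ * (1 - σ))) * r ^ l :=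
        mul_le_mul_of_nonneg_right (h1.trans h2) hrl
      _ = M * K₀ * (1 - σ) * r ^ l := by ring
  -- combine
  have h4 : M * K₀ * r ^ l ≤ b * r ^ m + C := by
    have h := hC r hr
    simp only [hK₁def] at h
    linarith [h, hrl]
  have h5 := mul_le_mul_of_nonneg_left h4 (by linarith : (0:ℝ) ≤ 1 - σ)
  calc cx * r ^ m * (1 - σ ^ (1 - m)) + ax * r ^ l * (1 - σ ^ (1 - l))
      ≤ cbar * (-((m - 1) * (1 - σ))) * r ^ m + M * K₀ * (1 - σ) * r ^ l :=
        add_le_add ht1 ht2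
    _ ≤ (1 - σ) * (-(cbar * (m - 1) / 2) * r ^ m + C) := by
        simp only [hbdef] at h5
        linarith [h5]

theorem model_hamiltonian_convexity_condition
    (m l σ₀ cbar M : ℝ) (hm : 1 < m) (hl0 : 0 < l) (hlm : l < m)
    (hσ₀ : σ₀ ∈ Set.Ioo (0 : ℝ) 1) (hcbar : 0 < cbar) (hM : 0 ≤ M) :
    ∃ C > (0 : ℝ), ∀ (n : ℕ) (c a : EuclideanSpace ℝ (Fin n) → ℝ),
      (∀ x, cbar ≤ c x) → (∀ x, |a x| ≤ M) →
      ∀ (H : EuclideanSpace ℝ (Fin n) → EuclideanSpace ℝ (Fin n) → ℝ),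
        (∀ x p, H x p = c x * ‖p‖ ^ m + a x * ‖p‖ ^ l) →
        ∀ (x p : EuclideanSpace ℝ (Fin n)), ∀ σ ∈ Set.Ioo σ₀ 1,
          H x p - σ * H x (σ⁻¹ • p) ≤
            (1 - σ) * (-(cbar * (m - 1) / 2) * ‖p‖ ^ m + C) := by
  obtain ⟨hσ₀0, hσ₀1⟩ := hσ₀
  obtain ⟨C, hCpos, hcore⟩ := core_estimate m l σ₀ cbar M hm hl0 hlm hσ₀0 hσ₀1 hcbar hM
  refine ⟨C, hCpos, ?_⟩
  intro n c a hc ha H hH x p σ hσ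
  obtain ⟨hσl, hσu⟩ := hσ
  have hσpos : 0 < σ := lt_trans hσ₀0 hσl
  have hr : (0:ℝ) ≤ ‖p‖ := norm_nonneg p
  have hnorm : ‖σ⁻¹ • p‖ = σ⁻¹ * ‖p‖ := by
    rw [norm_smul, Real.norm_eq_abs, abs_of_pos (inv_pos.2 hσpos)]
  have e1 : ∀ k : ℝ, (σ⁻¹ * ‖p‖) ^ k = σ ^ (-k) * ‖p‖ ^ k := by
    intro k
    rw [Real.mul_rpow (inv_nonneg.2 hσpos.le) hr, Real.inv_rpow hσpos.le,
      ← Real.rpow_neg hσpos.le]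
  have e2 : ∀ k : ℝ, σ ^ (1 - k) = σ * σ ^ (-k) := by
    intro k
    rw [show (1 - k) = 1 + (-k) by ring, Real.rpow_add hσpos, Real.rpow_one]
  have key : H x p - σ * H x (σ⁻¹ • p) =
      c x * ‖p‖ ^ m * (1 - σ ^ (1 - m)) + a x * ‖p‖ ^ l * (1 - σ ^ (1 - l)) := by
    rw [hH, hH, hnorm, e1 m, e1 l, e2 m, e2 l]
    ring
  rw [key]
  exact hcore (c x) (a x) ‖p‖ σ (hc x) (ha x) hr hσl hσu

end
end

section
/- For every real s > 1 there exists a constant δ(s) > 0 such that for all real numbers u, v with u > v, one has |u|^{s−1}u − |v|^{s−1}v ≥ δ(s)·(u−v)^s. -/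
open Real

lemma odd_pow_aux_eq (s : ℝ) (hs : 0 < s) {u : ℝ} (hu : 0 ≤ u) :
    |u| ^ (s - 1) * u = u ^ s := by
  rcases eq_or_lt_of_le hu with h | h
  · simp [← h, Real.zero_rpow (ne_of_gt hs)]
  · rw [abs_of_pos h, ← Real.rpow_add_one h.ne', sub_add_cancel]

lemma odd_pow_aux_add_le (a b : ℝ) (ha : 0 ≤ a) (hb : 0 ≤ b) {p : ℝ} (hp : 1 ≤ p) :
    a ^ p + b ^ p ≤ (a + b) ^ p := by
  have h := NNReal.add_rpow_le_rpow_add a.toNNReal b.toNNReal hp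
  rw [← NNReal.coe_le_coe] at h
  rwa [NNReal.coe_add, NNReal.coe_rpow, NNReal.coe_rpow, NNReal.coe_rpow,
    ← Real.toNNReal_add ha hb, Real.coe_toNNReal _ ha, Real.coe_toNNReal _ hb,
    Real.coe_toNNReal _ (add_nonneg ha hb)] at h

lemma odd_pow_aux_mul (a b : ℝ) (ha : 0 ≤ a) (hb : 0 ≤ b) {p : ℝ} (hp : 1 ≤ p) :
    (a + b) ^ p ≤ 2 ^ (p - 1) * (a ^ p + b ^ p) := by
  have h := NNReal.rpow_add_le_mul_rpow_add_rpow a.toNNReal b.toNNReal hp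
  rw [← NNReal.coe_le_coe] at h
  rw [NNReal.coe_mul, NNReal.coe_add, NNReal.coe_rpow, NNReal.coe_rpow, NNReal.coe_rpow,
    NNReal.coe_rpow, ← Real.toNNReal_add ha hb, Real.coe_toNNReal _ ha,
    Real.coe_toNNReal _ hb, Real.coe_toNNReal _ (add_nonneg ha hb)] at h
  simpa using h

theorem odd_power_difference_lower_bound (s : ℝ) (hs : 1 < s) :
    ∃ δ > (0 : ℝ), ∀ u v : ℝ, v < u →
      δ * (u - v) ^ s ≤ |u| ^ (s - 1) * u - |v| ^ (s - 1) * v := by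
  have hs0 : (0 : ℝ) < s := lt_trans one_pos hs
  have hs1 : (1 : ℝ) ≤ s := hs.le
  refine ⟨(2 : ℝ) ^ (1 - s), Real.rpow_pos_of_pos two_pos _, fun u v huv => ?_⟩
  have hδle : (2 : ℝ) ^ (1 - s) ≤ 1 :=
    Real.rpow_le_one_of_one_le_of_nonpos one_le_two (by linarith)
  have hpow_pos : (0 : ℝ) < (u - v) ^ s := Real.rpow_pos_of_pos (by linarith) _
  rcases le_or_gt 0 v with hv | hv
  · -- 0 ≤ v < u
    have hu : (0 : ℝ) ≤ u := le_of_lt (lt_of_le_of_lt hv huv)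
    rw [odd_pow_aux_eq s hs0 hu, odd_pow_aux_eq s hs0 hv]
    have h := odd_pow_aux_add_le v (u - v) hv (by linarith) hs1
    rw [add_sub_cancel] at h
    nlinarith
  · rcases le_or_gt u 0 with hu | hu
    · -- v < u ≤ 0
      have key : ∀ w : ℝ, w ≤ 0 → |w| ^ (s - 1) * w = -((-w) ^ s) := by
        intro w hw
        have := odd_pow_aux_eq s hs0 (neg_nonneg.mpr hw)
        rw [abs_neg] at this
        linarith [this]
      rw [key u hu, key v hv.le]
      have h := odd_pow_aux_add_le (-u) (u - v) (by linarith) (by linarith) hs1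
      have : (-u) + (u - v) = -v := by ring
      rw [this] at h
      nlinarith
    · -- v < 0 < u
      rw [odd_pow_aux_eq s hs0 hu.le]
      have hkey : |v| ^ (s - 1) * v = -((-v) ^ s) := by
        have := odd_pow_aux_eq s hs0 (neg_nonneg.mpr hv.le)
        rw [abs_neg] at this
        linarith [this]
      rw [hkey]
      have h := odd_pow_aux_mul u (-v) hu.le (by linarith) hs1
      have hrw : u + -v = u - v := by ring
      rw [hrw] at h
      have h2 : (2 : ℝ) ^ (1 - s) * (2 : ℝ) ^ (s - 1) = 1 := by
        rw [← Real.rpow_add two_pos]; norm_num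
      have h3 : (2 : ℝ) ^ (1 - s) * (u - v) ^ s ≤
          (2 : ℝ) ^ (1 - s) * ((2 : ℝ) ^ (s - 1) * (u ^ s + (-v) ^ s)) := by
        apply mul_le_mul_of_nonneg_left h (le_of_lt (Real.rpow_pos_of_pos two_pos _))
      rw [← mul_assoc, h2, one_mul] at h3
      linarith
end
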